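/- For every integer h ≥ 1 there exists a closed squared spiral w : ZMod (6h) → ℤ² on 6h vertices that is a curl whose turn-sign sequence consists of exactly 2h maximal runs of consecutive equally-oriented vertices, each run of length 3 (hv-sequence (3,3)_h), and whose associated pair (S⁰, S¹) is an hv-convex switching. -/

import Mathlib

/-- The four quadrant regions `Z_i(v)` in `ℤ²`. -/
def Zq (i : Fin 4) (v : ℤ × ℤ) : Set (ℤ × ℤ) :=
  match i with
  | 0 => {p | p.1 ≤ v.1 ∧ p.2 ≤ v.2}
  | 1 => {p | v.1 ≤ p.1 ∧ p.2 ≤ v.2}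
  | 2 => {p | v.1 ≤ p.1 ∧ v.2 ≤ p.2}
  | 3 => {p | p.1 ≤ v.1 ∧ v.2 ≤ p.2}

/-- Horizontal projection: the number of points of `S` on the horizontal line `y = c`. -/
noncomputable def hProj (S : Set (ℤ × ℤ)) (c : ℤ) : ℕ := {p ∈ S | p.2 = c}.ncard

/-- Vertical projection: the number of points of `S` on the vertical line `x = c`. -/
noncomputable def vProj (S : Set (ℤ × ℤ)) (c : ℤ) : ℕ := {p ∈ S | p.1 = c}.ncard

/-- An hv-switching: a pair of disjoint finite sets of equal cardinality having the same
horizontal and vertical projections. -/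
def IsHvSwitching (S0 S1 : Set (ℤ × ℤ)) : Prop :=
  S0.Finite ∧ S1.Finite ∧ Disjoint S0 S1 ∧ S0.ncard = S1.ncard ∧
    (∀ c : ℤ, hProj S0 c = hProj S1 c) ∧ (∀ c : ℤ, vProj S0 c = vProj S1 c)

/-- An hv-convex switching: an hv-switching in which every point has a free region,
i.e. a quadrant containing no point of the other component. -/
def IsHvConvexSwitching (S0 S1 : Set (ℤ × ℤ)) : Prop :=
  IsHvSwitching S0 S1 ∧ (∀ x ∈ S0, ∃ i : Fin 4, Zq i x ∩ S1 = ∅) ∧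
    (∀ x ∈ S1, ∃ i : Fin 4, Zq i x ∩ S0 = ∅)

/-- A closed squared spiral on `m` vertices: an injective closed lattice path whose
segments are alternately horizontal (from even-indexed vertices) and vertical
(from odd-indexed vertices). -/
structure IsClosedSquaredSpiral {m : ℕ} (w : ZMod m → ℤ × ℤ) : Prop where
  even_m : Even m
  four_le : 4 ≤ m
  inj : Function.Injective w
  horiz : ∀ i : ZMod m, Even i.val → (w (i + 1)).2 = (w i).2 ∧ (w (i + 1)).1 ≠ (w i).1
  vert : ∀ i : ZMod m, ¬ Even i.val → (w (i + 1)).1 = (w i).1 ∧ (w (i + 1)).2 ≠ (w i).2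

/-- The turn `d(i) = u₁v₂ − u₂v₁` at vertex `i`, where `u = w i − w (i−1)` and
`v = w (i+1) − w i`. -/
def turn {m : ℕ} (w : ZMod m → ℤ × ℤ) (i : ZMod m) : ℤ :=
  ((w i).1 - (w (i - 1)).1) * ((w (i + 1)).2 - (w i).2)
    - ((w i).2 - (w (i - 1)).2) * ((w (i + 1)).1 - (w i).1)

/-- A window: a squared spiral all of whose turns have the same sign. -/
def IsWindow {m : ℕ} (w : ZMod m → ℤ × ℤ) : Prop :=
  (∀ i : ZMod m, 0 < turn w i) ∨ (∀ i : ZMod m, turn w i < 0)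

/-- The even-indexed vertices of a spiral. -/
def spiralEven {m : ℕ} (w : ZMod m → ℤ × ℤ) : Set (ℤ × ℤ) := w '' {i | Even i.val}

/-- The odd-indexed vertices of a spiral. -/
def spiralOdd {m : ℕ} (w : ZMod m → ℤ × ℤ) : Set (ℤ × ℤ) := w '' {i | ¬ Even i.val}


/-!
The `j`-th winding of the curl visits `(0, -j)`, `(j + 1, -j)`, `(j + 1, 1)`, `(-(j + 1), 1)`,
`(-(j + 1), j + 2)`, `(0, j + 2)` and then drops down the `y`-axis to the start `(0, -(j + 1))` of
the next, wider winding; the last winding drops back to the origin. The edge directions are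
east, north, west, north, east, south in every winding, so the turns come in blocks of three
left turns followed by three right turns. Every closed squared spiral is an hv-switching, since
its horizontal edges pair each even vertex with an odd vertex in the same row and its vertical
edges pair each odd vertex with an even vertex in the same column. Convexity comes from the
even and odd vertices lying on six disjoint rays.
-/

theorem ZMod.val_add_natCast_mod_of_dvd {m d : ℕ} [NeZero m] (hd : d ∣ m) (a : ZMod m)
    (k : ℕ) :
    (a + k).val % d = (a.val + k) % d := by
  rw [ZMod.val_add, ZMod.val_natCast, Nat.mod_mod_of_dvd _ hd, Nat.add_mod,
    Nat.mod_mod_of_dvd _ hd, ← Nat.add_mod]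

theorem ZMod.val_add_one_mod_of_dvd {m d : ℕ} [NeZero m] (hd : d ∣ m) (a : ZMod m) :
    (a + 1).val % d = (a.val + 1) % d := by
  simpa using ZMod.val_add_natCast_mod_of_dvd hd a 1

theorem ZMod.val_add_one_of_lt {m : ℕ} [NeZero m] {a : ZMod m} (ha : a.val + 1 < m) :
    (a + 1).val = a.val + 1 := by
  rw [← Nat.mod_eq_of_lt (ZMod.val_lt (a + 1)), ZMod.val_add_one_mod_of_dvd dvd_rfl,
    Nat.mod_eq_of_lt ha]

theorem ZMod.val_sub_one_mod_six {m : ℕ} [NeZero m] (hm : 6 ∣ m) (a : ZMod m) :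
    (a - 1).val % 6 = (a.val + 5) % 6 := by
  have := ZMod.val_add_one_mod_of_dvd hm (a - 1)
  rw [sub_add_cancel] at this
  omega

theorem ZMod.even_val_add_one_iff {m : ℕ} [NeZero m] (hm : Even m) (a : ZMod m) :
    Even (a + 1).val ↔ ¬ Even a.val := by
  have := ZMod.val_add_one_mod_of_dvd (even_iff_two_dvd.mp hm) a
  rw [Nat.even_iff, Nat.even_iff]
  omega

section SquaredSpiral

variable {m : ℕ} {w : ZMod m → ℤ × ℤ}

theorem ncard_sep_image_eq {α β : Type*} {f : α → β} (hf : Function.Injective f) (A : Set α)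
    (P : β → Prop) : {p ∈ f '' A | P p}.ncard = {a ∈ A | P (f a)}.ncard := by
  rw [← Set.ncard_image_of_injective _ hf]
  congr 1
  ext p
  constructor
  · rintro ⟨⟨a, ha, rfl⟩, hp⟩
    exact ⟨a, ⟨ha, hp⟩, rfl⟩
  · rintro ⟨a, ⟨ha, hp⟩, rfl⟩
    exact ⟨⟨a, ha, rfl⟩, hp⟩

theorem ncard_sep_image_shift [NeZero m] (hw : Function.Injective w) (Q R : ZMod m → Prop)
    (hQR : ∀ i, R (i + 1) ↔ Q i) (P : ℤ × ℤ → Prop)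
    (hP : ∀ i, Q i → (P (w (i + 1)) ↔ P (w i))) :
    {p ∈ w '' {i | Q i} | P p}.ncard = {p ∈ w '' {i | R i} | P p}.ncard := by
  rw [ncard_sep_image_eq hw, ncard_sep_image_eq hw,
    ← Set.ncard_image_of_injective _ (add_left_injective (1 : ZMod m))]
  congr 1
  ext i
  constructor
  · rintro ⟨i, ⟨hi, hp⟩, rfl⟩
    exact ⟨(hQR i).2 hi, (hP i hi).2 hp⟩
  · rintro ⟨hi, hp⟩
    have hi' : Q (i - 1) := (hQR (i - 1)).1 (by simpa using hi)
    refine ⟨i - 1, ⟨hi', ?_⟩, sub_add_cancel i 1⟩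
    simpa using (hP (i - 1) hi').1 (by simpa using hp)

theorem IsClosedSquaredSpiral.isHvSwitching (hw : IsClosedSquaredSpiral w) :
    IsHvSwitching (spiralEven w) (spiralOdd w) := by
  have : NeZero m := ⟨by have := hw.four_le; omega⟩
  have hpar := ZMod.even_val_add_one_iff hw.even_m
  have hpar' (i : ZMod m) : ¬ Even (i + 1).val ↔ Even i.val := by rw [hpar, not_not]
  refine ⟨(Set.toFinite _).image w, (Set.toFinite _).image w, ?_, ?_, fun c => ?_, fun c => ?_⟩
  · rw [Set.disjoint_left]
    rintro p ⟨i, hi, rfl⟩ ⟨i', hi', he⟩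
    exact hi' (hw.inj he ▸ hi)
  · simpa only [Set.sep_true, spiralEven, spiralOdd] using
      ncard_sep_image_shift hw.inj (fun i => Even i.val) (fun i => ¬ Even i.val) hpar'
        (fun _ => True) fun _ _ => Iff.rfl
  · exact ncard_sep_image_shift hw.inj (fun i => Even i.val) (fun i => ¬ Even i.val) hpar'
      (fun p => p.2 = c) fun i hi => by simp only [(hw.horiz i hi).1]
  · exact (ncard_sep_image_shift hw.inj (fun i => ¬ Even i.val) (fun i => Even i.val) hpar
      (fun p => p.1 = c) fun i hi => by simp only [(hw.vert i hi).1]).symm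

end SquaredSpiral

def curlVertex (j : ℕ) : ℕ → ℤ × ℤ
  | 0 => (0, -j)
  | 1 => (j + 1, -j)
  | 2 => (j + 1, 1)
  | 3 => (-(j + 1), 1)
  | 4 => (-(j + 1), j + 2)
  | _ => (0, j + 2)

def curlSpiral (h : ℕ) (i : ZMod (6 * h)) : ℤ × ℤ := curlVertex (i.val / 6) (i.val % 6)

/-- The direction of the edge leaving vertex `k` of a winding. -/
def curlDir : ℕ → ℤ × ℤ
  | 0 => (1, 0)
  | 1 => (0, 1)
  | 2 => (-1, 0)
  | 3 => (0, 1)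
  | 4 => (1, 0)
  | _ => (0, -1)

def cross (u v : ℤ × ℤ) : ℤ := u.1 * v.2 - u.2 * v.1

theorem turn_eq_cross {m : ℕ} (w : ZMod m → ℤ × ℤ) (i : ZMod m) :
    turn w i = cross (w i - w (i - 1)) (w (i + 1) - w i) := rfl

theorem cross_smul_smul (a b : ℤ) (u v : ℤ × ℤ) :
    cross (a • u) (b • v) = a * b * cross u v := by
  simp only [cross, Prod.smul_fst, Prod.smul_snd, smul_eq_mul]
  ring

theorem curlVertex_injective {j j' k k' : ℕ} (hk : k < 6) (hk' : k' < 6)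
    (he : curlVertex j k = curlVertex j' k') : j = j' ∧ k = k' := by
  interval_cases k <;> interval_cases k' <;> simp [curlVertex, Prod.ext_iff] at he <;> omega

theorem curlDir_horizontal {k : ℕ} (hk6 : k < 6) (hk : Even k) :
    (curlDir k).2 = 0 ∧ (curlDir k).1 ≠ 0 := by
  rw [Nat.even_iff] at hk
  interval_cases k <;> simp_all [curlDir]

theorem curlDir_vertical {k : ℕ} (hk6 : k < 6) (hk : ¬ Even k) :
    (curlDir k).1 = 0 ∧ (curlDir k).2 ≠ 0 := by
  rw [Nat.not_even_iff] at hk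
  interval_cases k <;> simp_all [curlDir]

/-- Three left turns followed by three right turns. -/
theorem cross_curlDir (k : ℕ) :
    cross (curlDir ((k + 5) % 6)) (curlDir (k % 6)) = if k % 6 < 3 then 1 else -1 := by
  rw [Nat.add_mod]
  have := Nat.mod_lt k (by norm_num : 6 > 0)
  interval_cases k % 6 <;> rfl

theorem snd_eq_and_fst_ne_of_sub_eq_smul {p q d : ℤ × ℤ} {c : ℤ} (hc : c ≠ 0)
    (hd : d.2 = 0 ∧ d.1 ≠ 0) (he : q - p = c • d) : q.2 = p.2 ∧ q.1 ≠ p.1 := by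
  have e1 := congrArg Prod.fst he
  have e2 := congrArg Prod.snd he
  simp only [Prod.fst_sub, Prod.snd_sub, Prod.smul_fst, Prod.smul_snd, smul_eq_mul, hd.1,
    mul_zero, sub_eq_zero] at e1 e2
  exact ⟨e2, fun h => mul_ne_zero hc hd.2 (by rw [← e1, h, sub_self])⟩

theorem fst_eq_and_snd_ne_of_sub_eq_smul {p q d : ℤ × ℤ} {c : ℤ} (hc : c ≠ 0)
    (hd : d.1 = 0 ∧ d.2 ≠ 0) (he : q - p = c • d) : q.1 = p.1 ∧ q.2 ≠ p.2 := by
  simpa using snd_eq_and_fst_ne_of_sub_eq_smul (p := p.swap) (q := q.swap) (d := d.swap) hc hd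
    (by rw [← Prod.swap_sub, he, Prod.smul_swap])

section Curl

variable {h : ℕ} [NeZero h]

theorem curlSpiral_injective : Function.Injective (curlSpiral h) := by
  intro i i' he
  obtain ⟨hj, hk⟩ :=
    curlVertex_injective (Nat.mod_lt _ (by norm_num)) (Nat.mod_lt _ (by norm_num)) he
  exact ZMod.val_injective _ (by omega)

theorem curlSpiral_add_one_sub (i : ZMod (6 * h)) :
    ∃ c : ℤ, 0 < c ∧ curlSpiral h (i + 1) - curlSpiral h i = c • curlDir (i.val % 6) := by
  have hmod := ZMod.val_add_one_mod_of_dvd (dvd_mul_right 6 h) i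
  have hv := ZMod.val_lt i
  simp only [curlSpiral]
  obtain hk | hk := Nat.lt_or_ge (i.val % 6) 5
  · rw [ZMod.val_add_one_of_lt (by omega), show (i.val + 1) / 6 = i.val / 6 by omega,
      show (i.val + 1) % 6 = i.val % 6 + 1 by omega]
    generalize i.val / 6 = j
    interval_cases i.val % 6
    · exact ⟨j + 1, by positivity, by simp [curlVertex, curlDir]⟩
    · exact ⟨j + 1, by positivity, by simp [curlVertex, curlDir]; ring⟩
    · exact ⟨2 * j + 2, by positivity, by simp [curlVertex, curlDir]; ring⟩
    · exact ⟨j + 1, by positivity, by simp [curlVertex, curlDir]; ring⟩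
    · exact ⟨j + 1, by positivity, by simp [curlVertex, curlDir]⟩
  · rw [show (i + 1).val % 6 = 0 by omega, show i.val % 6 = 5 by omega]
    exact ⟨(i + 1).val / 6 + i.val / 6 + 2, by positivity, by simp [curlVertex, curlDir]; ring⟩

theorem isClosedSquaredSpiral_curlSpiral : IsClosedSquaredSpiral (curlSpiral h) where
  even_m := ⟨3 * h, by ring⟩
  four_le := by have := NeZero.ne h; omega
  inj := curlSpiral_injective
  horiz i hi := by
    obtain ⟨c, hc, he⟩ := curlSpiral_add_one_sub i
    exact snd_eq_and_fst_ne_of_sub_eq_smul hc.ne'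
      (curlDir_horizontal (Nat.mod_lt _ (by norm_num)) (by rw [Nat.even_iff] at hi ⊢; omega)) he
  vert i hi := by
    obtain ⟨c, hc, he⟩ := curlSpiral_add_one_sub i
    exact fst_eq_and_snd_ne_of_sub_eq_smul hc.ne'
      (curlDir_vertical (Nat.mod_lt _ (by norm_num)) (by rw [Nat.not_even_iff] at hi ⊢; omega)) he

theorem sign_turn_curlSpiral (i : ZMod (6 * h)) :
    SignType.sign (turn (curlSpiral h) i) = if i.val % 6 < 3 then 1 else -1 := by
  obtain ⟨a, ha, hea⟩ := curlSpiral_add_one_sub (i - 1)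
  obtain ⟨b, hb, heb⟩ := curlSpiral_add_one_sub i
  rw [sub_add_cancel] at hea
  rw [turn_eq_cross, hea, heb, cross_smul_smul, ZMod.val_sub_one_mod_six (dvd_mul_right 6 h),
    cross_curlDir, sign_mul, sign_mul, sign_pos ha, sign_pos hb]
  split_ifs <;> simp

theorem curlSpiral_turn_mul_pos_iff (a b : ZMod (6 * h)) :
    0 < turn (curlSpiral h) a * turn (curlSpiral h) b ↔ (a.val % 6 < 3 ↔ b.val % 6 < 3) := by
  rw [← sign_eq_one_iff, sign_mul, sign_turn_curlSpiral, sign_turn_curlSpiral]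
  split_ifs <;> simp <;> omega

theorem curlSpiral_turn_mul_neg_iff (a b : ZMod (6 * h)) :
    turn (curlSpiral h) a * turn (curlSpiral h) b < 0 ↔ ¬ (a.val % 6 < 3 ↔ b.val % 6 < 3) := by
  rw [← sign_eq_neg_one_iff, sign_mul, sign_turn_curlSpiral, sign_turn_curlSpiral]
  split_ifs <;> simp <;> omega

theorem curlSpiral_maximal_run_length (a : ZMod (6 * h)) (L : ℕ) (hL : 1 ≤ L)
    (hrun : ∀ k : ℕ, k < L → 0 < turn (curlSpiral h) (a + k) * turn (curlSpiral h) a)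
    (hprev : turn (curlSpiral h) (a - 1) * turn (curlSpiral h) a < 0)
    (hnext : turn (curlSpiral h) (a + L) * turn (curlSpiral h) a < 0) : L = 3 := by
  have hres := ZMod.val_add_natCast_mod_of_dvd (dvd_mul_right 6 h) a
  rw [curlSpiral_turn_mul_neg_iff, ZMod.val_sub_one_mod_six (dvd_mul_right 6 h)] at hprev
  rw [curlSpiral_turn_mul_neg_iff, hres] at hnext
  obtain hL3 | hL3 := Nat.lt_or_ge 3 L
  · have h3 := hrun 3 hL3
    rw [curlSpiral_turn_mul_pos_iff, hres] at h3
    omega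
  · omega

theorem not_isWindow_curlSpiral : ¬ IsWindow (curlSpiral h) := by
  have h0 : 0 < turn (curlSpiral h) 0 := by
    rw [← sign_eq_one_iff, sign_turn_curlSpiral]
    simp
  have h3 : turn (curlSpiral h) (3 : ℕ) < 0 := by
    rw [← sign_eq_neg_one_iff, sign_turn_curlSpiral,
      ZMod.val_natCast_of_lt (by have := NeZero.ne h; omega)]
    simp
  rintro (hpos | hneg)
  exacts [(hpos _).not_gt h3, (hneg _).not_gt h0]

end Curl

section Convexity

variable {h : ℕ}

theorem mem_spiralEven_curlSpiral {p : ℤ × ℤ} (hp : p ∈ spiralEven (curlSpiral h)) :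
    ∃ j : ℕ, p = (0, -(j : ℤ)) ∨ p = ((j : ℤ) + 1, 1) ∨
      p = (-((j : ℤ) + 1), (j : ℤ) + 2) := by
  obtain ⟨i, hi : Even i.val, rfl⟩ := hp
  have hk : i.val % 6 = 0 ∨ i.val % 6 = 2 ∨ i.val % 6 = 4 := by rw [Nat.even_iff] at hi; omega
  refine ⟨i.val / 6, ?_⟩
  rcases hk with hk | hk | hk <;> simp [curlSpiral, hk, curlVertex]

theorem mem_spiralOdd_curlSpiral {p : ℤ × ℤ} (hp : p ∈ spiralOdd (curlSpiral h)) :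
    ∃ j : ℕ, p = ((j : ℤ) + 1, -(j : ℤ)) ∨ p = (-((j : ℤ) + 1), 1) ∨
      p = (0, (j : ℤ) + 2) := by
  obtain ⟨i, hi : ¬ Even i.val, rfl⟩ := hp
  have hk : i.val % 6 = 1 ∨ i.val % 6 = 3 ∨ i.val % 6 = 5 := by
    rw [Nat.not_even_iff] at hi; omega
  refine ⟨i.val / 6, ?_⟩
  rcases hk with hk | hk | hk <;> simp [curlSpiral, hk, curlVertex]

/-- `S⁰` lies on the rays `x = 0, y ≤ 0`, `y = 1, x > 0` and `x + y = 1, x < 0`, and `S¹` on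
the three complementary rays; at each point, the quadrant containing the part of its ray beyond
it is free of the other set. -/
theorem isHvConvexSwitching_curlSpiral [NeZero h] :
    IsHvConvexSwitching (spiralEven (curlSpiral h)) (spiralOdd (curlSpiral h)) := by
  refine ⟨isClosedSquaredSpiral_curlSpiral.isHvSwitching, fun x hx => ?_, fun x hx => ?_⟩
  · obtain ⟨j, rfl | rfl | rfl⟩ := mem_spiralEven_curlSpiral hx
    on_goal 1 => refine ⟨0, ?_⟩
    on_goal 2 => refine ⟨2, ?_⟩
    on_goal 3 => refine ⟨3, ?_⟩
    all_goals
      refine Set.eq_empty_iff_forall_notMem.2 fun p ⟨hz, hp⟩ => ?_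
      obtain ⟨j', rfl | rfl | rfl⟩ := mem_spiralOdd_curlSpiral hp <;> simp [Zq] at hz <;> omega
  · obtain ⟨j, rfl | rfl | rfl⟩ := mem_spiralOdd_curlSpiral hx
    on_goal 1 => refine ⟨1, ?_⟩
    on_goal 2 => refine ⟨0, ?_⟩
    on_goal 3 => refine ⟨2, ?_⟩
    all_goals
      refine Set.eq_empty_iff_forall_notMem.2 fun p ⟨hz, hp⟩ => ?_
      obtain ⟨j', rfl | rfl | rfl⟩ := mem_spiralEven_curlSpiral hp <;> simp [Zq] at hz <;> omega

end Convexity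

/-- for every `h ≥ 1` there is a closed squared spiral on `6h` vertices
which is a curl, all of whose maximal runs of consecutive equally-oriented vertices have
length `3` (so the turn-sign sequence consists of exactly `2h` maximal runs, each of
length `3`, i.e. the hv-sequence is `(3,3)_h`), and whose associated pair is an hv-convex
switching. -/
theorem stmt12 (h : ℕ) (hh : 1 ≤ h) :
    ∃ w : ZMod (6 * h) → ℤ × ℤ, IsClosedSquaredSpiral w ∧ ¬ IsWindow w ∧
      (∀ (a : ZMod (6 * h)) (L : ℕ), 1 ≤ L → L < 6 * h →
        (∀ k : ℕ, k < L → 0 < turn w (a + (k : ZMod (6 * h))) * turn w a) →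
        turn w (a - 1) * turn w a < 0 →
        turn w (a + (L : ZMod (6 * h))) * turn w a < 0 → L = 3) ∧
      IsHvConvexSwitching (spiralEven w) (spiralOdd w) := by
  have : NeZero h := ⟨by omega⟩
  exact ⟨curlSpiral h, isClosedSquaredSpiral_curlSpiral, not_isWindow_curlSpiral,
    fun a L hL _ => curlSpiral_maximal_run_length a L hL, isHvConvexSwitching_curlSpiral⟩
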